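/- arXiv:1107.3262 — 2 statements merged into one kernel-verified Lean document; each statement's English description precedes it below -/
import Mathlib

section
/- Let τ be a non-monotone permutation with x(τ) ≰ i(τ). Then the closed interval [x(τ), τ] in the consecutive pattern poset contains exactly two maximal chains, and these two chains have only the elements x(τ) and τ in common. -/
/-- Standardization of a list of distinct naturals: replace each entry by its rank
(the number of entries less than or equal to it). -/
def stdize (s : List ℕ) : List ℕ := s.map (fun x => (s.filter (· ≤ x)).length)

/-- All contiguous subwords (infixes) of a list. -/
def infixes (l : List ℕ) : List (List ℕ) := l.inits.flatMap List.tails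

/-- `l` is a permutation of `{1,…,d}` where `d = l.length ≥ 1`; these are the
elements of the consecutive pattern poset. -/
def IsPermList (l : List ℕ) : Prop := l ≠ [] ∧ l.Perm (List.range' 1 l.length)

/-- Consecutive pattern containment: `σ ≤ τ` iff `σ` is the standardization of
some contiguous subsequence of `τ`. -/
def PattLE (σ τ : List ℕ) : Prop := σ ∈ (infixes τ).map stdize

instance (σ τ : List ℕ) : Decidable (PattLE σ τ) :=
  inferInstanceAs (Decidable (σ ∈ (infixes τ).map stdize))

/-- A permutation is monotone if its letters strictly increase or strictly decrease. -/
def MonotoneList (l : List ℕ) : Prop := l.Chain' (· < ·) ∨ l.Chain' (· > ·)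

/-- The interior `i(τ)`: standardization of `τ` with first and last letters removed. -/
def pattInterior (τ : List ℕ) : List ℕ := stdize τ.tail.dropLast

/-- Length of the longest proper prefix of `τ` whose standardization is also the
standardization of a suffix of `τ`. -/
def extLen (τ : List ℕ) : ℕ :=
  Nat.findGreatest (fun k => stdize (τ.take k) = stdize (τ.drop (τ.length - k))) (τ.length - 1)

/-- The exterior `x(τ)`: the longest permutation that is both a proper prefix and a
suffix of `τ`. -/
def pattExterior (τ : List ℕ) : List ℕ := stdize (τ.take (extLen τ))

/-- The closed interval `[σ,τ]` in the consecutive pattern poset, as a `Finset`. -/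
def pattInterval (σ τ : List ℕ) : Finset (List ℕ) :=
  ((infixes τ).map stdize).toFinset.filter (fun z => PattLE σ z)

/-- The open interval `(σ,τ)` in the consecutive pattern poset, as a `Finset`. -/
def openPattInterval (σ τ : List ℕ) : Finset (List ℕ) :=
  ((infixes τ).map stdize).toFinset.filter (fun z => PattLE σ z ∧ z ≠ σ ∧ z ≠ τ)

/-- `τ` covers `σ` in the consecutive pattern poset: `σ < τ` and no element lies
strictly between them. -/
def CoveredBy (σ τ : List ℕ) : Prop :=
  PattLE σ τ ∧ σ ≠ τ ∧ ¬ ∃ ρ, IsPermList ρ ∧ PattLE σ ρ ∧ PattLE ρ τ ∧ ρ ≠ σ ∧ ρ ≠ τ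

/-- `c` is a maximal chain of the interval `[σ,τ]`: it starts at `τ`, ends at `σ`,
and each element covers the next. -/
def IsMaxChainPatt (σ τ : List ℕ) (c : List (List ℕ)) : Prop :=
  c.head? = some τ ∧ c.getLast? = some σ ∧ c.Chain' (fun a b => CoveredBy b a)

/-!
Write `x = x(τ)`, `e = |x|` and `d = |τ|`. Since `x ≰ i(τ)`, every occurrence of `x` in `τ`
touches the first or the last letter of `τ`, hence so does every occurrence of a pattern
`ρ ≥ x`: each element of `[x, τ]` is the prefix or the suffix of `τ` of its length, and below a
proper prefix only prefixes survive (dually for suffixes). A cover raises the length by exactly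
one, so a maximal chain continues from `τ` either with the prefix or with the suffix of length
`d - 1`, and is then forced to consist of all prefixes (resp. suffixes) of lengths `e, …, d`.
By maximality of `e` the prefix and suffix of length `k` differ for `e < k < d`, and
non-monotonicity gives `e ≤ d - 2`, so the two chains differ and meet only at their ends.
-/

open List

def rank (s : List ℕ) (x : ℕ) : ℕ := (s.filter (· ≤ x)).length

theorem stdize_eq_map_rank (s : List ℕ) : stdize s = s.map (rank s) := rfl

@[simp] theorem length_stdize (s : List ℕ) : (stdize s).length = s.length := length_map _

theorem rank_lt_rank {s : List ℕ} {a b : ℕ} (hb : b ∈ s) (hab : a < b) :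
    rank s a < rank s b := by
  have hfilter : (s.filter (· ≤ b)).filter (· ≤ a) = s.filter (· ≤ a) := by
    rw [filter_filter]
    refine filter_congr fun y _ => ?_
    simp only [Bool.and_eq_left_iff_imp, decide_eq_true_eq]
    omega
  rw [rank, rank, ← hfilter, length_filter_lt_length_iff_exists]
  exact ⟨b, mem_filter.2 ⟨hb, by simp⟩, by simpa using hab⟩

theorem rank_le_rank_iff {s : List ℕ} {a b : ℕ} (ha : a ∈ s) (hb : b ∈ s) :
    rank s a ≤ rank s b ↔ a ≤ b := by
  refine ⟨fun h => ?_, fun h => ?_⟩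
  · by_contra! hba
    exact (rank_lt_rank ha hba).not_ge h
  · rcases h.lt_or_eq with h | rfl
    · exact (rank_lt_rank hb h).le
    · rfl

theorem rank_lt_rank_iff {s : List ℕ} {a b : ℕ} (ha : a ∈ s) (hb : b ∈ s) :
    rank s a < rank s b ↔ a < b := by
  simpa only [not_le] using (rank_le_rank_iff hb ha).not

theorem stdize_map_of_le_iff {w : List ℕ} {g : ℕ → ℕ}
    (hg : ∀ a ∈ w, ∀ b ∈ w, g a ≤ g b ↔ a ≤ b) : stdize (w.map g) = stdize w := by
  simp only [stdize_eq_map_rank, map_map]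
  refine map_congr_left fun x hx => ?_
  simp only [Function.comp, rank, filter_map, length_map]
  congr 1
  exact filter_congr fun y hy => decide_eq_decide.2 (hg y hy x hx)

theorem stdize_map_rank {w s : List ℕ} (h : w ⊆ s) : stdize (w.map (rank s)) = stdize w :=
  stdize_map_of_le_iff fun _ ha _ hb => rank_le_rank_iff (h ha) (h hb)

theorem getElem_stdize_lt_getElem_stdize_iff {s : List ℕ} {i j : ℕ} (hi : i < s.length)
    (hj : j < s.length) :
    (stdize s)[i]'(by simpa using hi) < (stdize s)[j]'(by simpa using hj) ↔ s[i] < s[j] := by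
  simp only [stdize_eq_map_rank, getElem_map]
  exact rank_lt_rank_iff (getElem_mem hi) (getElem_mem hj)

theorem isPermList_stdize {s : List ℕ} (hs : s.Nodup) (hne : s ≠ []) :
    IsPermList (stdize s) := by
  refine ⟨by simpa [← length_eq_zero_iff] using hne, ?_⟩
  have hnodup : (stdize s).Nodup := hs.map_on fun a ha b hb hab =>
    le_antisymm ((rank_le_rank_iff ha hb).1 hab.le) ((rank_le_rank_iff hb ha).1 hab.ge)
  have hsub : stdize s ⊆ range' 1 (stdize s).length := by
    intro y hy
    rw [stdize_eq_map_rank] at hy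
    obtain ⟨x, hx, rfl⟩ := mem_map.1 hy
    have hpos : 0 < rank s x := length_pos_of_mem (mem_filter.2 ⟨hx, by simp⟩)
    have hle : rank s x ≤ s.length := length_filter_le _ _
    rw [mem_range'_1, length_stdize]
    omega
  exact (hnodup.subperm hsub).perm_of_length_le (by simp)

theorem filter_le_range' {n x : ℕ} (hx : x ≤ n) :
    (range' 1 n).filter (· ≤ x) = range' 1 x := by
  obtain ⟨m, rfl⟩ := Nat.exists_eq_add_of_le hx
  rw [← range'_append_1, filter_append, filter_eq_self.2, filter_eq_nil_iff.2, append_nil]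
  · intro a ha
    have := mem_range'_1.1 ha
    simp only [decide_eq_true_eq]
    omega
  · intro a ha
    have := mem_range'_1.1 ha
    simp only [decide_eq_true_eq]
    omega

theorem stdize_of_isPermList {ρ : List ℕ} (h : IsPermList ρ) : stdize ρ = ρ := by
  refine (map_congr_left fun x hx => ?_).trans (map_id ρ)
  have hx' := mem_range'_1.1 (h.2.subset hx)
  change (ρ.filter (· ≤ x)).length = x
  rw [(h.2.filter _).length_eq, filter_le_range' (by omega), length_range']

theorem stdize_of_length_eq_one {s : List ℕ} (h : s.length = 1) : stdize s = [1] := by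
  obtain ⟨a, rfl⟩ := length_eq_one_iff.1 h
  simp [stdize]

theorem IsPermList.nodup {ρ : List ℕ} (h : IsPermList ρ) : ρ.Nodup :=
  h.2.nodup_iff.2 nodup_range'

theorem pattLE_iff {σ τ : List ℕ} : PattLE σ τ ↔ ∃ w, w <:+: τ ∧ stdize w = σ := by
  simp only [PattLE, infixes, mem_map, mem_flatMap, mem_inits, mem_tails]
  constructor
  · rintro ⟨w, ⟨p, hp, hw⟩, rfl⟩
    exact ⟨w, hw.isInfix.trans hp.isInfix, rfl⟩
  · rintro ⟨w, ⟨u, v, rfl⟩, rfl⟩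
    exact ⟨w, ⟨u ++ w, ⟨v, rfl⟩, ⟨u, rfl⟩⟩, rfl⟩

theorem pattLE_stdize_iff {ρ s : List ℕ} :
    PattLE ρ (stdize s) ↔ ∃ w, w <:+: s ∧ stdize w = ρ := by
  rw [pattLE_iff, stdize_eq_map_rank]
  constructor
  · rintro ⟨z, hz, rfl⟩
    obtain ⟨w, hw, rfl⟩ := infix_map_iff.1 hz
    exact ⟨w, hw, (stdize_map_rank hw.subset).symm⟩
  · rintro ⟨w, hw, rfl⟩
    exact ⟨w.map (rank s), hw.map _, stdize_map_rank hw.subset⟩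

theorem pattLE_stdize_of_infix {w s : List ℕ} (h : w <:+: s) : PattLE (stdize w) (stdize s) :=
  pattLE_stdize_iff.2 ⟨w, h, rfl⟩

namespace PattLE

variable {a b c : List ℕ}

theorem trans (hab : PattLE a b) (hbc : PattLE b c) : PattLE a c := by
  obtain ⟨v, hv, rfl⟩ := pattLE_iff.1 hbc
  obtain ⟨w, hw, rfl⟩ := pattLE_stdize_iff.1 hab
  exact pattLE_iff.2 ⟨w, hw.trans hv, rfl⟩

theorem refl_left (h : PattLE a b) : PattLE a a := by
  obtain ⟨w, -, rfl⟩ := pattLE_iff.1 h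
  exact pattLE_stdize_of_infix (infix_refl w)

theorem length_le (h : PattLE a b) : a.length ≤ b.length := by
  obtain ⟨w, hw, rfl⟩ := pattLE_iff.1 h
  simpa using hw.length_le

theorem length_lt (h : PattLE a b) (hne : a ≠ b) (hb : IsPermList b) : a.length < b.length := by
  obtain ⟨w, hw, rfl⟩ := pattLE_iff.1 h
  refine h.length_le.lt_of_ne fun hl => hne ?_
  rw [hw.eq_of_length (by simpa using hl), stdize_of_isPermList hb]

theorem isPermList (h : PattLE a b) (hb : b.Nodup) (ha : a ≠ []) : IsPermList a := by
  obtain ⟨w, hw, rfl⟩ := pattLE_iff.1 h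
  exact isPermList_stdize (hw.sublist.nodup hb) (by rintro rfl; exact ha rfl)

end PattLE

theorem pattLE_refl {ρ : List ℕ} (h : IsPermList ρ) : PattLE ρ ρ := by
  simpa only [stdize_of_isPermList h] using pattLE_stdize_of_infix (infix_refl ρ)

theorem List.IsInfix.exists_infix_length_succ {α : Type*} {w l : List α} (h : w <:+: l)
    (hl : w.length < l.length) : ∃ w', w <:+: w' ∧ w' <:+: l ∧ w'.length = w.length + 1 := by
  obtain ⟨u, v, rfl⟩ := h
  rcases v with _ | ⟨a, v⟩
  · obtain rfl | ⟨u, a, rfl⟩ := eq_nil_or_concat u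
    · simp at hl
    · exact ⟨a :: w, ⟨[a], [], by simp⟩, ⟨u, [], by simp⟩, rfl⟩
  · exact ⟨w ++ [a], ⟨[], [a], by simp⟩, ⟨u, v, by simp⟩, by simp⟩

theorem coveredBy_iff {a b : List ℕ} (hb : IsPermList b) :
    CoveredBy a b ↔ PattLE a b ∧ a.length + 1 = b.length := by
  refine ⟨fun ⟨hab, hne, hmin⟩ => ⟨hab, ?_⟩, fun ⟨hab, hl⟩ => ⟨hab, ?_, ?_⟩⟩
  · refine le_antisymm (hab.length_lt hne hb) (not_lt.1 fun hlt => hmin ?_)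
    obtain ⟨w, hw, rfl⟩ := pattLE_iff.1 hab
    rw [length_stdize] at hlt
    obtain ⟨w', hww', hw'b, hl'⟩ := hw.exists_infix_length_succ (by omega)
    refine ⟨stdize w', isPermList_stdize (hw'b.sublist.nodup hb.nodup)
      (ne_nil_of_length_pos (by omega)), pattLE_stdize_of_infix hww',
      pattLE_iff.2 ⟨w', hw'b, rfl⟩,
      ne_of_apply_ne length (by simp [hl']), ne_of_apply_ne length (by rw [length_stdize]; omega)⟩
  · exact ne_of_apply_ne length (by omega)
  · rintro ⟨ρ, hρ, haρ, hρb, hρa, hρb'⟩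
    have := haρ.length_lt (Ne.symm hρa) hρ
    have := hρb.length_lt hρb' hb
    omega

theorem List.eq_range'_of_isChain_succ {l : List ℕ} {s : ℕ}
    (h : l.IsChain (fun a b => b = a + 1)) (hs : l.head? = some s) : l = range' s l.length := by
  induction l generalizing s with
  | nil => simp at hs
  | cons a l ih =>
    obtain rfl : a = s := by simpa using hs
    cases l with
    | nil => rfl
    | cons b l =>
      obtain ⟨rfl, h⟩ := isChain_cons_cons.1 h
      conv_lhs => rw [ih h rfl]
      simp [range'_succ]

def patternChain (f : ℕ → List ℕ) (lo hi : ℕ) : List (List ℕ) :=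
  (range' lo (hi + 1 - lo)).reverse.map f

section PatternChain

variable {f : ℕ → List ℕ} {lo hi : ℕ}

theorem mem_patternChain {ρ : List ℕ} :
    ρ ∈ patternChain f lo hi ↔ ∃ k, lo ≤ k ∧ k ≤ hi ∧ f k = ρ := by
  simp only [patternChain, mem_map, mem_reverse, mem_range'_1]
  constructor
  · rintro ⟨k, ⟨h1, h2⟩, rfl⟩
    exact ⟨k, h1, by omega, rfl⟩
  · rintro ⟨k, h1, h2, rfl⟩
    exact ⟨k, ⟨h1, by omega⟩, rfl⟩

theorem patternChain_self : patternChain f lo lo = [f lo] := by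
  simp [patternChain]

theorem patternChain_of_lt (h : lo < hi) :
    patternChain f lo hi = f hi :: patternChain f lo (hi - 1) := by
  have hlen : hi + 1 - lo = (hi - 1 + 1 - lo) + 1 := by omega
  have hlast : lo + (hi - 1 + 1 - lo) = hi := by omega
  rw [patternChain, patternChain, hlen, range'_1_concat, hlast]
  simp

theorem isMaxChainPatt_patternChain (hlo : lo ≤ hi)
    (hcov : ∀ k, lo ≤ k → k < hi → CoveredBy (f k) (f (k + 1))) :
    IsMaxChainPatt (f lo) (f hi) (patternChain f lo hi) := by
  induction hi, hlo using Nat.le_induction with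
  | base =>
    rw [patternChain_self]
    exact ⟨rfl, rfl, by exact isChain_singleton _⟩
  | succ n hn ih =>
    obtain ⟨hhead, hlast, hchain⟩ := ih fun k h1 h2 => hcov k h1 (by omega)
    rw [patternChain_of_lt (by omega), Nat.add_sub_cancel]
    refine ⟨rfl, by rw [getLast?_cons, hlast]; rfl, (hchain : List.IsChain _ _).cons ?_⟩
    rw [hhead]
    rintro _ ⟨⟩
    exact hcov n hn (by omega)

end PatternChain

namespace IsMaxChainPatt

variable {σ τ : List ℕ} {c : List (List ℕ)}

theorem pattLE_of_mem (hτ : IsPermList τ) (hc : IsMaxChainPatt σ τ c) {ρ : List ℕ}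
    (hρ : ρ ∈ c) : PattLE σ ρ ∧ PattLE ρ τ := by
  obtain ⟨hhead, hlast, hchain⟩ := hc
  have hchain : c.IsChain (fun a b => CoveredBy b a) := hchain
  have hbelow : ∀ ρ ∈ c, PattLE ρ τ :=
    hchain.induction _ _ (fun _ _ hcov h => hcov.1.trans h) fun hne => by
      rw [Option.some_injective _ ((head?_eq_some_head hne).symm.trans hhead)]
      exact pattLE_refl hτ
  have habove : ∀ ρ ∈ c, PattLE σ ρ :=
    hchain.backwards_induction _ _ (fun _ _ hcov h => h.trans hcov.1) fun hne => by
      rw [Option.some_injective _ ((getLast?_eq_some_getLast hne).symm.trans hlast)]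
      exact (hbelow σ (mem_of_getLast? hlast)).refl_left
  exact ⟨habove ρ hρ, hbelow ρ hρ⟩

theorem isPermList_of_mem (hτ : IsPermList τ) (hσ : σ ≠ []) (hc : IsMaxChainPatt σ τ c)
    {ρ : List ℕ} (hρ : ρ ∈ c) : IsPermList ρ := by
  obtain ⟨hσρ, hρτ⟩ := hc.pattLE_of_mem hτ hρ
  exact hρτ.isPermList hτ.nodup
    (ne_nil_of_length_pos ((length_pos_of_ne_nil hσ).trans_le hσρ.length_le))

theorem map_length (hτ : IsPermList τ) (hσ : σ ≠ []) (hc : IsMaxChainPatt σ τ c) :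
    c.map length = (range' σ.length (τ.length + 1 - σ.length)).reverse := by
  set L := (c.map length).reverse with hLdef
  have hchain : L.IsChain (fun a b => b = a + 1) := by
    rw [isChain_reverse, isChain_map]
    exact (hc.2.2 : c.IsChain _).imp_of_mem_imp fun a b ha _ hab =>
      ((coveredBy_iff (hc.isPermList_of_mem hτ hσ ha)).1 hab).2.symm
  have hhead : L.head? = some σ.length := by rw [head?_reverse, getLast?_map, hc.2.1]; rfl
  have hlast : L.getLast? = some τ.length := by rw [getLast?_reverse, head?_map, hc.1]; rfl
  have hL := eq_range'_of_isChain_succ hchain hhead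
  have hlen : L.length = τ.length + 1 - σ.length := by
    rw [hL, getLast?_range'] at hlast
    split_ifs at hlast
    simp only [Option.some.injEq] at hlast
    omega
  rw [← reverse_reverse (c.map length), ← hLdef, ← hlen, ← hL]

theorem eq_patternChain (hτ : IsPermList τ) (hσ : σ ≠ []) (hc : IsMaxChainPatt σ τ c)
    {f : ℕ → List ℕ} (hf : ∀ ρ ∈ c, f ρ.length = ρ) :
    c = patternChain f σ.length τ.length := by
  rw [patternChain, ← hc.map_length hτ hσ, map_map]
  exact ((map_congr_left hf).trans (map_id c)).symm

theorem eq_cons_cons (hne : σ ≠ τ) (hc : IsMaxChainPatt σ τ c) :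
    ∃ b r, c = τ :: b :: r ∧ CoveredBy b τ ∧ IsMaxChainPatt σ b (b :: r) := by
  obtain ⟨hhead, hlast, hchain⟩ := hc
  rcases c with _ | ⟨a, _ | ⟨b, r⟩⟩
  · simp at hhead
  · simp only [head?_cons, Option.some.injEq, getLast?_singleton] at hhead hlast
    exact absurd (hlast.symm.trans hhead) hne
  · obtain rfl : a = τ := by simpa using hhead
    obtain ⟨hcov, hchain⟩ := isChain_cons_cons.1 (hchain : List.IsChain _ _)
    exact ⟨b, r, rfl, hcov, rfl, by rwa [getLast?_cons_cons] at hlast, hchain⟩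

end IsMaxChainPatt

def prefixPatt (τ : List ℕ) (k : ℕ) : List ℕ := stdize (τ.take k)

def suffixPatt (τ : List ℕ) (k : ℕ) : List ℕ := stdize (τ.drop (τ.length - k))

section PrefixSuffix

variable {τ w : List ℕ} {k : ℕ}

theorem length_prefixPatt (hk : k ≤ τ.length) : (prefixPatt τ k).length = k := by
  simp [prefixPatt, hk]

theorem length_suffixPatt (hk : k ≤ τ.length) : (suffixPatt τ k).length = k := by
  rw [suffixPatt, length_stdize, length_drop]
  omega

theorem prefixPatt_length (hτ : IsPermList τ) : prefixPatt τ τ.length = τ := by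
  rw [prefixPatt, take_length, stdize_of_isPermList hτ]

theorem suffixPatt_length (hτ : IsPermList τ) : suffixPatt τ τ.length = τ := by
  rw [suffixPatt, Nat.sub_self, drop_zero, stdize_of_isPermList hτ]

theorem List.IsPrefix.stdize_eq_prefixPatt (h : w <+: τ) : stdize w = prefixPatt τ w.length := by
  rw [prefixPatt, ← prefix_iff_eq_take.1 h]

theorem List.IsSuffix.stdize_eq_suffixPatt (h : w <:+ τ) : stdize w = suffixPatt τ w.length := by
  rw [suffixPatt, ← suffix_iff_eq_drop.1 h]

theorem isPermList_prefixPatt (hτ : IsPermList τ) (h1 : 1 ≤ k) (hk : k ≤ τ.length) :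
    IsPermList (prefixPatt τ k) :=
  isPermList_stdize ((take_sublist _ _).nodup hτ.nodup)
    (ne_nil_of_length_pos (by rw [length_take]; omega))

theorem isPermList_suffixPatt (hτ : IsPermList τ) (h1 : 1 ≤ k) (hk : k ≤ τ.length) :
    IsPermList (suffixPatt τ k) :=
  isPermList_stdize ((drop_sublist _ _).nodup hτ.nodup)
    (ne_nil_of_length_pos (by rw [length_drop]; omega))

theorem coveredBy_prefixPatt_succ (hτ : IsPermList τ) (hk : k < τ.length) :
    CoveredBy (prefixPatt τ k) (prefixPatt τ (k + 1)) :=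
  (coveredBy_iff (isPermList_prefixPatt hτ (by omega) hk)).2
    ⟨pattLE_stdize_of_infix (take_prefix_take_left (by omega)).isInfix,
      by rw [length_prefixPatt hk.le, length_prefixPatt hk]⟩

theorem coveredBy_suffixPatt_succ (hτ : IsPermList τ) (hk : k < τ.length) :
    CoveredBy (suffixPatt τ k) (suffixPatt τ (k + 1)) :=
  (coveredBy_iff (isPermList_suffixPatt hτ (by omega) hk)).2
    ⟨pattLE_stdize_of_infix (drop_suffix_drop_left _ (by omega)).isInfix,
      by rw [length_suffixPatt hk.le, length_suffixPatt hk]⟩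

end PrefixSuffix

section Exterior

variable {τ : List ℕ} {k : ℕ}

theorem extLen_le : extLen τ ≤ τ.length - 1 :=
  Nat.findGreatest_le _

theorem le_extLen (hk : k < τ.length) (h : prefixPatt τ k = suffixPatt τ k) : k ≤ extLen τ :=
  Nat.le_findGreatest (by omega) h

theorem prefixPatt_ne_suffixPatt (h1 : extLen τ < k) (h2 : k < τ.length) :
    prefixPatt τ k ≠ suffixPatt τ k :=
  fun h => (le_extLen h2 h).not_gt h1

theorem one_le_extLen (h : 2 ≤ τ.length) : 1 ≤ extLen τ :=
  le_extLen (by omega) (by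
    rw [prefixPatt, suffixPatt, stdize_of_length_eq_one (by rw [length_take]; omega),
      stdize_of_length_eq_one (by rw [length_drop]; omega)])

theorem pattExterior_eq_prefixPatt : pattExterior τ = prefixPatt τ (extLen τ) := rfl

theorem pattExterior_eq_suffixPatt : pattExterior τ = suffixPatt τ (extLen τ) :=
  Nat.findGreatest_spec (P := fun k => stdize (τ.take k) = stdize (τ.drop (τ.length - k)))
    (Nat.zero_le _) (by simp)

theorem length_pattExterior : (pattExterior τ).length = extLen τ := by
  rw [pattExterior_eq_prefixPatt, length_prefixPatt (extLen_le.trans (Nat.sub_le _ _))]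

theorem pattExterior_ne_nil (he : 1 ≤ extLen τ) : pattExterior τ ≠ [] :=
  ne_nil_of_length_pos (by rw [length_pattExterior]; omega)

theorem lt_iff_lt_of_stdize_eq {A B : List ℕ} (h : stdize A = stdize B) {i j : ℕ}
    (hi : i < A.length) (hj : j < A.length) (hi' : i < B.length) (hj' : j < B.length) :
    A[i] < A[j] ↔ B[i] < B[j] := by
  rw [← getElem_stdize_lt_getElem_stdize_iff hi hj,
    ← getElem_stdize_lt_getElem_stdize_iff hi' hj']
  simp only [h]

theorem monotoneList_of_prefixPatt_eq_suffixPatt (hn : τ.Nodup)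
    (h : prefixPatt τ (τ.length - 1) = suffixPatt τ (τ.length - 1)) : MonotoneList τ := by
  rcases eq_or_ne τ [] with rfl | hne
  · exact Or.inl isChain_nil
  have hd : τ.length - (τ.length - 1) = 1 := by have := length_pos_of_ne_nil hne; omega
  rw [prefixPatt, suffixPatt, hd] at h
  have hstep : ∀ i (hi : i + 2 < τ.length), τ[i] < τ[i + 1] ↔ τ[i + 1] < τ[i + 2] := by
    intro i hi
    have := lt_iff_lt_of_stdize_eq h (i := i) (j := i + 1)
      (by rw [length_take]; omega) (by rw [length_take]; omega)
      (by rw [length_drop]; omega) (by rw [length_drop]; omega)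
    simpa [Nat.add_comm 1, Nat.add_assoc] using this
  have hall : ∀ i (hi : i + 1 < τ.length), τ[i] < τ[i + 1] ↔ τ[0] < τ[1] := by
    intro i hi
    induction i with
    | zero => rfl
    | succ i ih => exact (hstep i hi).symm.trans (ih (by omega))
  by_cases hasc : ∀ i (hi : i + 1 < τ.length), τ[i] < τ[i + 1]
  · exact Or.inl (isChain_iff_getElem.2 hasc)
  · push Not at hasc
    obtain ⟨j, hj, hdesc⟩ := hasc
    refine Or.inr (isChain_iff_getElem.2 fun i hi => ?_)
    have hne : τ[i] ≠ τ[i + 1] := fun heq => by simpa using hn.getElem_inj_iff.1 heq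
    have := mt ((hall i hi).trans (hall j hj).symm).1 (not_lt.2 hdesc)
    omega

theorem extLen_add_two_le (hn : τ.Nodup) (hm : ¬ MonotoneList τ) :
    extLen τ + 2 ≤ τ.length := by
  by_contra! h
  have he : extLen τ = τ.length - 1 := le_antisymm extLen_le (by omega)
  refine hm (monotoneList_of_prefixPatt_eq_suffixPatt hn ?_)
  rw [← he, ← pattExterior_eq_suffixPatt, pattExterior_eq_prefixPatt]

theorem eq_nil_or_eq_nil_of_pattExterior_le (hx : ¬ PattLE (pattExterior τ) (pattInterior τ))
    {u w v : List ℕ} (hτ : τ = u ++ w ++ v) (hw : PattLE (pattExterior τ) (stdize w)) :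
    u = [] ∨ v = [] := by
  by_contra! huv
  refine hx (hw.trans (pattLE_stdize_of_infix ⟨u.tail, v.dropLast, ?_⟩))
  rw [hτ, append_assoc u, tail_append_of_ne_nil huv.1,
    dropLast_append_of_ne_nil (by simp [huv.2]), dropLast_append_of_ne_nil huv.2, append_assoc]

theorem eq_prefixPatt_or_eq_suffixPatt (hx : ¬ PattLE (pattExterior τ) (pattInterior τ))
    {ρ : List ℕ} (hxρ : PattLE (pattExterior τ) ρ) (hρ : PattLE ρ τ) :
    prefixPatt τ ρ.length = ρ ∨ suffixPatt τ ρ.length = ρ := by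
  obtain ⟨w, ⟨u, v, huv⟩, rfl⟩ := pattLE_iff.1 hρ
  rw [length_stdize]
  rcases eq_nil_or_eq_nil_of_pattExterior_le hx huv.symm hxρ with rfl | rfl
  · exact Or.inl (IsPrefix.stdize_eq_prefixPatt ⟨v, by simpa using huv⟩).symm
  · exact Or.inr (IsSuffix.stdize_eq_suffixPatt ⟨u, by simpa using huv⟩).symm

theorem prefixPatt_length_eq_of_pattLE (hx : ¬ PattLE (pattExterior τ) (pattInterior τ))
    (hk : k < τ.length) {ρ : List ℕ} (hxρ : PattLE (pattExterior τ) ρ)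
    (hρ : PattLE ρ (prefixPatt τ k)) : prefixPatt τ ρ.length = ρ := by
  obtain ⟨w, ⟨u, v, huv⟩, rfl⟩ := pattLE_stdize_iff.1 hρ
  have hτ : τ = u ++ w ++ (v ++ τ.drop k) := by rw [← append_assoc, huv, take_append_drop]
  rcases eq_nil_or_eq_nil_of_pattExterior_le hx hτ hxρ with rfl | h
  · rw [length_stdize]
    exact (IsPrefix.stdize_eq_prefixPatt ⟨v ++ τ.drop k, by simpa using hτ.symm⟩).symm
  · simp only [append_eq_nil_iff, drop_eq_nil_iff] at h
    omega

theorem suffixPatt_length_eq_of_pattLE (hx : ¬ PattLE (pattExterior τ) (pattInterior τ))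
    (hk : k < τ.length) {ρ : List ℕ} (hxρ : PattLE (pattExterior τ) ρ)
    (hρ : PattLE ρ (suffixPatt τ k)) : suffixPatt τ ρ.length = ρ := by
  obtain ⟨w, ⟨u, v, huv⟩, rfl⟩ := pattLE_stdize_iff.1 hρ
  have hτ : τ = (τ.take (τ.length - k) ++ u) ++ w ++ v := by
    simp only [append_assoc] at huv ⊢
    rw [huv, take_append_drop]
  rcases eq_nil_or_eq_nil_of_pattExterior_le hx hτ hxρ with h | rfl
  · rcases take_eq_nil_iff.1 (append_eq_nil_iff.1 h).1 with h | rfl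
    · omega
    · simp at hk
  · rw [length_stdize]
    exact (IsSuffix.stdize_eq_suffixPatt
      ⟨τ.take (τ.length - k) ++ u, by simpa using hτ.symm⟩).symm

end Exterior

section Chains

variable {τ : List ℕ} {c : List (List ℕ)} {k : ℕ}

theorem isMaxChainPatt_prefixChain (hτ : IsPermList τ) :
    IsMaxChainPatt (pattExterior τ) τ (patternChain (prefixPatt τ) (extLen τ) τ.length) := by
  have := isMaxChainPatt_patternChain (f := prefixPatt τ) (extLen_le.trans (Nat.sub_le _ _))
    fun _ _ hk => coveredBy_prefixPatt_succ hτ hk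
  rwa [prefixPatt_length hτ, ← pattExterior_eq_prefixPatt] at this

theorem isMaxChainPatt_suffixChain (hτ : IsPermList τ) :
    IsMaxChainPatt (pattExterior τ) τ (patternChain (suffixPatt τ) (extLen τ) τ.length) := by
  have := isMaxChainPatt_patternChain (f := suffixPatt τ) (extLen_le.trans (Nat.sub_le _ _))
    fun _ _ hk => coveredBy_suffixPatt_succ hτ hk
  rwa [suffixPatt_length hτ, ← pattExterior_eq_suffixPatt] at this

theorem eq_of_mem_prefixChain_of_mem_suffixChain (hτ : IsPermList τ) {ρ : List ℕ}
    (hP : ρ ∈ patternChain (prefixPatt τ) (extLen τ) τ.length)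
    (hS : ρ ∈ patternChain (suffixPatt τ) (extLen τ) τ.length) :
    ρ = pattExterior τ ∨ ρ = τ := by
  obtain ⟨k, hk1, hk2, rfl⟩ := mem_patternChain.1 hP
  obtain ⟨l, -, hl2, hl⟩ := mem_patternChain.1 hS
  obtain rfl : l = k := by
    simpa [length_suffixPatt hl2, length_prefixPatt hk2] using congrArg length hl
  rcases hk1.eq_or_lt with rfl | hk1
  · exact Or.inl rfl
  rcases hk2.eq_or_lt with rfl | hk2
  · exact Or.inr (prefixPatt_length hτ)
  · exact absurd hl.symm (prefixPatt_ne_suffixPatt hk1 hk2)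

theorem eq_prefixChain_of_isMaxChainPatt (hτ : IsPermList τ)
    (hx : ¬ PattLE (pattExterior τ) (pattInterior τ)) (he : 1 ≤ extLen τ)
    (hek : extLen τ ≤ k) (hk : k < τ.length)
    (hc : IsMaxChainPatt (pattExterior τ) (prefixPatt τ k) c) :
    c = patternChain (prefixPatt τ) (extLen τ) k := by
  have htop := isPermList_prefixPatt hτ (he.trans hek) hk.le
  have := hc.eq_patternChain htop (pattExterior_ne_nil he) fun ρ hρ =>
    prefixPatt_length_eq_of_pattLE hx hk (hc.pattLE_of_mem htop hρ).1 (hc.pattLE_of_mem htop hρ).2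
  rwa [length_pattExterior, length_prefixPatt hk.le] at this

theorem eq_suffixChain_of_isMaxChainPatt (hτ : IsPermList τ)
    (hx : ¬ PattLE (pattExterior τ) (pattInterior τ)) (he : 1 ≤ extLen τ)
    (hek : extLen τ ≤ k) (hk : k < τ.length)
    (hc : IsMaxChainPatt (pattExterior τ) (suffixPatt τ k) c) :
    c = patternChain (suffixPatt τ) (extLen τ) k := by
  have htop := isPermList_suffixPatt hτ (he.trans hek) hk.le
  have := hc.eq_patternChain htop (pattExterior_ne_nil he) fun ρ hρ =>
    suffixPatt_length_eq_of_pattLE hx hk (hc.pattLE_of_mem htop hρ).1 (hc.pattLE_of_mem htop hρ).2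
  rwa [length_pattExterior, length_suffixPatt hk.le] at this

theorem eq_prefixChain_or_eq_suffixChain (hτ : IsPermList τ)
    (hx : ¬ PattLE (pattExterior τ) (pattInterior τ)) (he : 1 ≤ extLen τ)
    (hc : IsMaxChainPatt (pattExterior τ) τ c) :
    c = patternChain (prefixPatt τ) (extLen τ) τ.length ∨
      c = patternChain (suffixPatt τ) (extLen τ) τ.length := by
  have hd : 1 ≤ τ.length := length_pos_of_ne_nil hτ.1
  have hed : extLen τ ≤ τ.length - 1 := extLen_le
  obtain ⟨b, r, rfl, hb, hbr⟩ :=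
    hc.eq_cons_cons (ne_of_apply_ne length (by rw [length_pattExterior]; omega))
  have hbl : b.length = τ.length - 1 := by
    have := ((coveredBy_iff hτ).1 hb).2
    omega
  have hxb := (hc.pattLE_of_mem hτ (mem_cons_of_mem _ mem_cons_self)).1
  rw [patternChain_of_lt (f := prefixPatt τ) (by omega), prefixPatt_length hτ,
    patternChain_of_lt (f := suffixPatt τ) (by omega), suffixPatt_length hτ]
  rcases eq_prefixPatt_or_eq_suffixPatt hx hxb hb.1 with h | h <;> rw [hbl] at h <;> subst h
  · exact Or.inl (congrArg _ (eq_prefixChain_of_isMaxChainPatt hτ hx he hed (by omega) hbr))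
  · exact Or.inr (congrArg _ (eq_suffixChain_of_isMaxChainPatt hτ hx he hed (by omega) hbr))

end Chains

/-- If `τ` is not monotone and `x(τ) ≰ i(τ)`, then the interval `[x(τ), τ]` has
exactly two maximal chains, and these chains meet only in `x(τ)` and `τ`. -/
theorem two_maximal_chains_exterior
    (τ : List ℕ) (hτ : IsPermList τ) (hm : ¬ MonotoneList τ)
    (hx : ¬ PattLE (pattExterior τ) (pattInterior τ)) :
    ∃ c₁ c₂ : List (List ℕ), c₁ ≠ c₂ ∧
      IsMaxChainPatt (pattExterior τ) τ c₁ ∧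
      IsMaxChainPatt (pattExterior τ) τ c₂ ∧
      (∀ c : List (List ℕ), IsMaxChainPatt (pattExterior τ) τ c → c = c₁ ∨ c = c₂) ∧
      (∀ ρ : List ℕ, ρ ∈ c₁ → ρ ∈ c₂ → ρ = pattExterior τ ∨ ρ = τ) := by
  have hd := extLen_add_two_le hτ.nodup hm
  have he := one_le_extLen (τ := τ) (by omega)
  refine ⟨_, _, fun h => ?_, isMaxChainPatt_prefixChain hτ, isMaxChainPatt_suffixChain hτ,
    fun c hc => eq_prefixChain_or_eq_suffixChain hτ hx he hc,
    fun ρ => eq_of_mem_prefixChain_of_mem_suffixChain hτ⟩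
  -- `c₁ = c₂` would put the prefix of length `d - 1` on both chains
  have hmem :
      prefixPatt τ (τ.length - 1) ∈ patternChain (prefixPatt τ) (extLen τ) τ.length :=
    mem_patternChain.2 ⟨_, by omega, by omega, rfl⟩
  rcases eq_of_mem_prefixChain_of_mem_suffixChain hτ hmem (h ▸ hmem) with h' | h' <;>
    have := congrArg length h' <;>
    simp only [length_prefixPatt (Nat.sub_le _ _), length_pattExterior] at this <;> omega
end

section
/- Let τ ∈ S_d with d > 2 and suppose x(τ) ≰ i(τ), and let k = |x(τ)|. Then x(τ) occurs in exactly two positions of τ: the only indices j with 0 ≤ j ≤ d−k and st(τ(j+1)τ(j+2)…τ(j+k)) = x(τ) are j = 0 (the prefix occurrence) and j = d−k (the suffix occurrence). -/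
/-- rank comparison reflects order (only membership of `x` is needed). -/
lemma rnk_le_iff {m : List ℕ} {x y : ℕ} (hx : x ∈ m) :
    (m.filter (· ≤ x)).length ≤ (m.filter (· ≤ y)).length ↔ x ≤ y := by
  constructor
  · intro h
    by_contra hxy
    push_neg at hxy
    have hsub : (m.filter (· ≤ y)).Sublist (m.filter (· ≤ x)) :=
      List.monotone_filter_right m (fun a ha => by
        simp only [decide_eq_true_eq] at ha ⊢; omega)
    have hlen : (m.filter (· ≤ y)).length = (m.filter (· ≤ x)).length :=
      le_antisymm hsub.length_le h
    have heq := hsub.eq_of_length hlen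
    have hxmem : x ∈ m.filter (· ≤ x) := by
      simp [List.mem_filter, hx]
    rw [← heq] at hxmem
    simp [List.mem_filter] at hxmem
    omega
  · intro h
    exact (List.monotone_filter_right m (fun a ha => by
      simp only [decide_eq_true_eq] at ha ⊢; omega)).length_le

/-- standardization is invariant under an entrywise order-isomorphic relabeling. -/
lemma stdize_map_orderIso {s : List ℕ} {g : ℕ → ℕ}
    (h : ∀ x ∈ s, ∀ y ∈ s, (x ≤ y ↔ g x ≤ g y)) :
    stdize (s.map g) = stdize s := by
  unfold stdize
  rw [List.map_map]
  apply List.map_congr_left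
  intro a ha
  show ((s.map g).filter (· ≤ g a)).length = (s.filter (· ≤ a)).length
  rw [List.filter_map, List.length_map]
  congr 1
  apply List.filter_congr
  intro b hb
  simp only [Function.comp_apply, decide_eq_decide]
  exact (h b hb a ha).symm

lemma mem_infixes {u l : List ℕ} (h : u <:+: l) : u ∈ infixes l := by
  obtain ⟨s, t, rfl⟩ := h
  unfold infixes
  rw [List.mem_flatMap]
  refine ⟨s ++ u, ?_, ?_⟩
  · rw [List.mem_inits]
    exact ⟨t, by rw [List.append_assoc]⟩
  · rw [List.mem_tails]
    exact ⟨s, rfl⟩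

/-- If `|τ| > 2` and `x(τ) ≰ i(τ)`, then `x(τ)` occurs in exactly two positions of
`τ`: as its prefix (position `j = 0`) and as its suffix (position `j = d − k`,
where `k = |x(τ)|`). -/
theorem exterior_exactly_two_occurrences (τ : List ℕ) (hτ : IsPermList τ)
    (h2 : 2 < τ.length) (hx : ¬ PattLE (pattExterior τ) (pattInterior τ)) :
    ∀ j : ℕ, j ≤ τ.length - (pattExterior τ).length →
      (stdize ((τ.drop j).take (pattExterior τ).length) = pattExterior τ ↔
        j = 0 ∨ j = τ.length - (pattExterior τ).length) := by
  have heb : extLen τ ≤ τ.length - 1 := Nat.findGreatest_le _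
  have hk : (pattExterior τ).length = extLen τ := by
    unfold pattExterior stdize
    rw [List.length_map, List.length_take]
    omega
  have hP : stdize (τ.take (extLen τ)) = stdize (τ.drop (τ.length - extLen τ)) := by
    have h0 : stdize (τ.take 0) = stdize (τ.drop (τ.length - 0)) := by
      simp only [List.take_zero, Nat.sub_zero, List.drop_length]
    exact Nat.findGreatest_spec
      (P := fun k => stdize (τ.take k) = stdize (τ.drop (τ.length - k)))
      (Nat.zero_le _) h0
  intro j hj
  rw [hk] at hj ⊢
  constructor
  · intro hstd
    by_contra hcon
    push_neg at hcon
    obtain ⟨hj0, hjd⟩ := hcon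
    have hj1 : 1 ≤ j := Nat.one_le_iff_ne_zero.mpr hj0
    have hjk : j + extLen τ ≤ τ.length - 1 := by omega
    apply hx
    set m : List ℕ := τ.tail.dropLast with hmdef
    have hm : m = (τ.drop 1).take (τ.length - 2) := by
      rw [hmdef, ← List.drop_one, List.dropLast_eq_take, List.length_drop]
      have h11 : τ.length - 1 - 1 = τ.length - 2 := by omega
      rw [h11]
    have hs : ((m.drop (j - 1)).take (extLen τ)) = (τ.drop j).take (extLen τ) := by
      rw [hm, List.drop_take, List.drop_drop, List.take_take]
      have h1 : 1 + (j - 1) = j := by omega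
      rw [h1, inf_eq_left.mpr (by omega : extLen τ ≤ τ.length - 2 - (j - 1))]
    -- the candidate infix of the interior
    unfold PattLE
    rw [List.mem_map]
    refine ⟨((pattInterior τ).drop (j - 1)).take (extLen τ), mem_infixes ?_, ?_⟩
    · exact (List.take_prefix _ _).isInfix.trans (List.drop_suffix _ _).isInfix
    · have hmap : ((pattInterior τ).drop (j - 1)).take (extLen τ)
          = ((m.drop (j - 1)).take (extLen τ)).map
              (fun x => (m.filter (· ≤ x)).length) := by
        unfold pattInterior stdize
        rw [List.map_take, List.map_drop]
      have hsubm : ((m.drop (j - 1)).take (extLen τ)) <:+: m :=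
        (List.take_prefix _ _).isInfix.trans (List.drop_suffix _ _).isInfix
      rw [hmap, stdize_map_orderIso (fun x hxs y hys =>
        (rnk_le_iff (hsubm.subset hxs)).symm), hs]
      exact hstd
  · rintro (rfl | rfl)
    · rw [List.drop_zero]
      rfl
    · rw [List.take_of_length_le (by rw [List.length_drop]; omega)]
      unfold pattExterior
      exact hP.symm
end
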